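/- arXiv:1501.00509 — 4 statements merged into one kernel-verified Lean document; each statement's English description precedes it below -/
import Mathlib

section
/- The exponential generating function T^•(z) = Σ_{n≥1} n^{n-1} z^n/n! of rooted labelled trees satisfies the functional equation T^•(z) = z·exp(T^•(z)) as an identity of formal power series. -/
/-!
Write `B = T^•/z`, with coefficients `(n+1)^(n-1)/n!`. Multiplied by `n!`, the `n`-th coefficient
of `B' = (T^•)' · B` is Abel's identity
`∑ₖ C(n,k) x(x+k)^(k-1) (y+n-k)^(n-k) = (x+y+n)^n` at `x = y = 1`.
By the chain rule `exp(T^•)` satisfies the same linear differential equation, and both series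
have constant term `1`, so `B = exp(T^•)`. Abel's identity is proved by induction on `n`:
the `x`-derivative of the `n`-th sum is `n` times the `(n-1)`-st sum at `x + 1`, and at `x = 0`
only the `k = 0` term survives.
-/

open PowerSeries

/-- Composition `f ∘ g` of formal power series, valid when `g` has zero constant term:
the `n`-th coefficient is `∑_{k ≤ n} (coeff k f) · (coeff n (g^k))`. -/
noncomputable def PSComp (f g : PowerSeries ℝ) : PowerSeries ℝ :=
  PowerSeries.mk fun n => ∑ k ∈ Finset.range (n + 1),
    (PowerSeries.coeff k f) * PowerSeries.coeff n (g ^ k)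

/-- The EGF of rooted labelled trees, `T^•(z) = Σ_{n≥1} n^{n-1} z^n/n!`. -/
noncomputable def Tdot : PowerSeries ℝ :=
  PowerSeries.mk fun n => if n = 0 then 0 else (n : ℝ) ^ (n - 1) / (Nat.factorial n)

open Finset Nat

/-- `abelPoly k x = x (x + k)^(k-1)`, read as `1` for `k = 0`. -/
noncomputable def abelPoly : ℕ → ℝ → ℝ
  | 0, _ => 1
  | k + 1, x => x * (x + (k + 1)) ^ k

@[simp] lemma abelPoly_zero (x : ℝ) : abelPoly 0 x = 1 := rfl

lemma abelPoly_succ (k : ℕ) (x : ℝ) : abelPoly (k + 1) x = x * (x + (k + 1)) ^ k := rfl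

lemma hasDerivAt_abelPoly_succ (k : ℕ) (x : ℝ) :
    HasDerivAt (abelPoly (k + 1)) ((k + 1) * abelPoly k (x + 1)) x := by
  have h := (hasDerivAt_id' x).fun_mul (((hasDerivAt_id' x).add_const ((k : ℝ) + 1)).fun_pow k)
  refine h.congr_deriv ?_
  rcases k with _ | k
  · simp
  · simp only [abelPoly_succ, Nat.cast_add, Nat.cast_one, Nat.add_sub_cancel, pow_succ]
    ring

noncomputable def abelSum (n : ℕ) (x y : ℝ) : ℝ :=
  ∑ k ∈ range (n + 1), (n.choose k : ℝ) * abelPoly k x * (y + (n - k : ℕ)) ^ (n - k)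

lemma hasDerivAt_abelSum_succ (n : ℕ) (x y : ℝ) :
    HasDerivAt (abelSum (n + 1) · y) ((n + 1) * abelSum n (x + 1) y) x := by
  have h := HasDerivAt.fun_sum (u := range (n + 1)) fun k _ =>
    ((hasDerivAt_abelPoly_succ k x).const_mul ((n + 1).choose (k + 1) : ℝ)).mul_const
      ((y + (n - k : ℕ)) ^ (n - k))
  unfold abelSum
  simp_rw [sum_range_succ' _ (n + 1), abelPoly_zero, Nat.succ_sub_succ]
  refine (h.add_const _).congr_deriv ?_
  rw [mul_sum]
  refine sum_congr rfl fun k _ => ?_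
  have hc : ((n + 1).choose (k + 1) : ℝ) * (k + 1) = (n + 1) * n.choose k := by
    exact_mod_cast (Nat.add_one_mul_choose_eq n k).symm
  linear_combination (abelPoly k (x + 1) * (y + (n - k : ℕ)) ^ (n - k)) * hc

lemma abelSum_zero_left (n : ℕ) (y : ℝ) : abelSum n 0 y = (y + n) ^ n := by
  rw [abelSum, sum_eq_single_of_mem 0 (by simp)]
  · simp
  · rintro (_ | k) _ hk
    · exact absurd rfl hk
    · simp [abelPoly_succ]

theorem abelSum_eq (n : ℕ) (x y : ℝ) : abelSum n x y = (x + y + n) ^ n := by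
  induction n generalizing x with
  | zero => simp [abelSum]
  | succ n ih =>
    have hderiv (x : ℝ) :
        HasDerivAt (fun x => abelSum (n + 1) x y - (x + (y + (n + 1))) ^ (n + 1)) 0 x := by
      have h := ((hasDerivAt_id' x).add_const (y + (n + 1))).fun_pow (n + 1)
      refine ((hasDerivAt_abelSum_succ n x y).sub h).congr_deriv ?_
      rw [ih]
      push_cast
      ring
    have := is_const_of_deriv_eq_zero (fun x => (hderiv x).differentiableAt)
      (fun x => (hderiv x).deriv) x 0
    rw [abelSum_zero_left] at this
    push_cast at this ⊢
    linear_combination this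

namespace PowerSeries

lemma coeff_mk_div_factorial_mul {K : Type*} [Field K] [CharZero K] (a b : ℕ → K) (n : ℕ) :
    coeff n (mk (fun k => a k / k !) * mk fun k => b k / k !) =
      (∑ k ∈ range (n + 1), n.choose k * a k * b (n - k)) / n ! := by
  rw [coeff_mul, Nat.sum_antidiagonal_eq_sum_range_succ_mk, sum_div]
  refine sum_congr rfl fun k hk => ?_
  have hkn : k ≤ n := Nat.lt_succ_iff.mp (mem_range.mp hk)
  have hfact : (n.choose k : K) * k ! * (n - k)! = n ! := by
    exact_mod_cast Nat.choose_mul_factorial_mul_factorial hkn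
  have hchoose : (n.choose k : K) ≠ 0 := by exact_mod_cast (Nat.choose_pos hkn).ne'
  rw [coeff_mk, coeff_mk, ← hfact]
  field_simp

theorem eq_of_derivative_eq_mul {R : Type*} [CommRing R] [IsAddTorsionFree R] {F f g : R⟦X⟧}
    (hf : d⁄dX R f = F * f) (hg : d⁄dX R g = F * g) (h0 : constantCoeff f = constantCoeff g) :
    f = g := by
  rw [← sub_eq_zero]
  have hd : d⁄dX R (f - g) = F * (f - g) := by rw [map_sub, hf, hg, mul_sub]
  ext n
  induction n using Nat.strong_induction_on with
  | _ n ih =>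
    rcases n with _ | n
    · simpa [sub_eq_zero] using h0
    have hsucc : coeff (n + 1) (f - g) * (n + 1) = 0 := by
      rw [← coeff_derivative, hd, coeff_mul]
      exact sum_eq_zero fun p hp => by
        rw [ih p.2 (by have := mem_antidiagonal.mp hp; omega), map_zero, mul_zero]
    rw [map_zero]
    have : (n + 1) • coeff (n + 1) (f - g) = 0 := by rw [nsmul_eq_mul']; exact_mod_cast hsucc
    exact (smul_eq_zero.mp this).resolve_left (Nat.succ_ne_zero n)

end PowerSeries

lemma PSComp_eq_subst {f g : ℝ⟦X⟧} (hg : constantCoeff g = 0) : PSComp f g = f.subst g := by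
  ext n
  rw [PSComp, coeff_mk, coeff_subst' (HasSubst.of_constantCoeff_zero' hg)]
  refine (finsum_eq_sum_of_support_subset _ fun k hk => ?_).symm
  rw [coe_range, Set.mem_Iio, Nat.lt_succ_iff]
  by_contra hnk
  refine hk ?_
  show coeff k f * coeff n (g ^ k) = 0
  have hX : X ^ k ∣ g ^ k := pow_dvd_pow_of_dvd (X_dvd_iff.mpr hg) k
  rw [X_pow_dvd_iff.mp hX n (by omega), mul_zero]

lemma constantCoeff_PSComp (f g : ℝ⟦X⟧) : constantCoeff (PSComp f g) = constantCoeff f := by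
  rw [← coeff_zero_eq_constantCoeff_apply, ← coeff_zero_eq_constantCoeff_apply, PSComp, coeff_mk]
  simp

lemma derivative_PSComp (f : ℝ⟦X⟧) {g : ℝ⟦X⟧} (hg : constantCoeff g = 0) :
    d⁄dX ℝ (PSComp f g) = PSComp (d⁄dX ℝ f) g * d⁄dX ℝ g := by
  rw [PSComp_eq_subst hg, PSComp_eq_subst hg, derivative_subst (HasSubst.of_constantCoeff_zero' hg)]

noncomputable def TdotDivX : ℝ⟦X⟧ := mk fun n => abelPoly n 1 / n !

lemma X_mul_TdotDivX : X * TdotDivX = Tdot := by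
  ext (_ | n)
  · simp [Tdot]
  rw [coeff_succ_X_mul, TdotDivX, Tdot, coeff_mk, coeff_mk, if_neg n.succ_ne_zero]
  rcases n with _ | n
  · simp
  rw [abelPoly_succ, factorial_succ (n + 1)]
  push_cast
  field_simp
  ring

lemma constantCoeff_TdotDivX : constantCoeff TdotDivX = 1 := by
  simp [TdotDivX, ← coeff_zero_eq_constantCoeff_apply]

lemma constantCoeff_Tdot : constantCoeff Tdot = 0 := by
  simp [Tdot, ← coeff_zero_eq_constantCoeff_apply]

lemma derivative_Tdot : d⁄dX ℝ Tdot = mk fun n => (1 + n : ℝ) ^ n / n ! := by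
  ext n
  rw [coeff_derivative, Tdot, coeff_mk, coeff_mk, if_neg n.succ_ne_zero, factorial_succ]
  push_cast
  field_simp
  ring

lemma derivative_TdotDivX : d⁄dX ℝ TdotDivX = d⁄dX ℝ Tdot * TdotDivX := by
  ext n
  rw [mul_comm, derivative_Tdot, TdotDivX,
    coeff_mk_div_factorial_mul (abelPoly · 1) fun k => (1 + k : ℝ) ^ k, coeff_derivative, coeff_mk]
  change _ = abelSum n 1 1 / _
  rw [abelSum_eq, abelPoly_succ, factorial_succ]
  push_cast
  field_simp
  ring

/-- `T^•(z) = z · exp(T^•(z))` as formal power series. -/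
theorem stmt_2 : Tdot = PowerSeries.X * PSComp (PowerSeries.exp ℝ) Tdot := by
  have hexp : d⁄dX ℝ (PSComp (exp ℝ) Tdot) = d⁄dX ℝ Tdot * PSComp (exp ℝ) Tdot := by
    rw [derivative_PSComp _ constantCoeff_Tdot, derivative_exp, mul_comm]
  have hTdotDivX : TdotDivX = PSComp (exp ℝ) Tdot :=
    eq_of_derivative_eq_mul derivative_TdotDivX hexp
      (by rw [constantCoeff_TdotDivX, constantCoeff_PSComp, constantCoeff_exp])
  rw [← hTdotDivX, X_mul_TdotDivX]
end

section
/- Let T(z) = Σ_{n≥1} n^{n-2} z^n/n! be the exponential generating function of labelled trees. Then its derivative satisfies T'(z) = exp(z·T'(z)) as formal power series. -/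
/-!
With the Abel polynomials `A_m(x) = x (x + m)^(m-1)` (and `A_0 = 1`) one has
`T'(z) = ∑ A_n(1) zⁿ/n!`. Abel's binomial identity
`A_m(x + y) = ∑_j (m choose j) A_j(x) A_{m-j}(y)` says that `x ↦ ∑ A_n(x) zⁿ/n!` turns sums
into products, so `T'(z)^k = ∑ A_n(k) zⁿ/n!`. Hence the `n`-th coefficient of `exp(z T'(z))` is
`∑_k (n choose k) A_{n-k}(k) / n!`, which the binomial theorem collapses to `A_n(1) / n!`.
Abel's identity is proved by induction on `m`: as polynomials in `y`, both sides satisfy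
`p_{m+1}' = (m + 1) p_m(y + 1)` and agree at `y = 0`.
-/

open Finset

/-- The EGF of labelled trees, `T(z) = Σ_{n≥1} n^{n-2} z^n/n!`. -/
noncomputable def Ttree : PowerSeries ℝ :=
  PowerSeries.mk fun n => if n = 0 then 0 else (n : ℝ) ^ (n - 2) / (Nat.factorial n)

namespace Polynomial

section CommSemiring

variable {R : Type*} [CommSemiring R]

noncomputable def abel : ℕ → R[X]
  | 0 => 1
  | m + 1 => X * (X + ((m + 1 : ℕ) : R[X])) ^ m

@[simp] theorem abel_zero : (abel 0 : R[X]) = 1 := rfl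

theorem abel_succ (m : ℕ) : (abel (m + 1) : R[X]) = X * (X + ((m + 1 : ℕ) : R[X])) ^ m := rfl

@[simp] theorem eval_zero_abel_succ (m : ℕ) : (abel (m + 1) : R[X]).eval 0 = 0 := by
  simp [abel_succ]

theorem derivative_abel_succ (m : ℕ) :
    derivative (abel (m + 1) : R[X]) = ((m + 1 : ℕ) : R[X]) * (abel m).comp (X + 1) := by
  cases m with
  | zero => simp [abel_succ]
  | succ m =>
    simp only [abel_succ, derivative_mul, derivative_X, derivative_pow, derivative_add,
      derivative_natCast, map_natCast, mul_comp, pow_comp, add_comp, X_comp, natCast_comp]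
    push_cast
    ring

theorem sum_choose_mul_eval_abel (n : ℕ) :
    ∑ k ∈ range (n + 1), (n.choose k : R) * (abel (n - k)).eval (k : R) = (abel n).eval 1 := by
  cases n with
  | zero => simp
  | succ m =>
    -- `(m+1 choose i+1) A_{m-i}(i+1) = (m+1)^(m-i) (m choose i)`, and these terms add up to
    -- `(1 + (m+1))^m = A_{m+1}(1)` by the binomial theorem
    have hterm : ∀ i ∈ range (m + 1), ((m + 1).choose (i + 1) : R) *
        (abel (m + 1 - (i + 1))).eval ((i + 1 : ℕ) : R) =
          1 ^ i * (m + 1 : R) ^ (m - i) * m.choose i := by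
      intro i hi
      rw [Nat.add_sub_add_right]
      obtain ⟨j, rfl⟩ := Nat.exists_eq_add_of_le (mem_range_succ_iff.mp hi)
      rw [Nat.add_sub_cancel_left]
      cases j with
      | zero => simp
      | succ j =>
        have hchoose := congrArg (Nat.cast (R := R)) (Nat.add_one_mul_choose_eq (i + (j + 1)) i)
        rw [abel_succ]
        push_cast at hchoose ⊢
        simp only [eval_mul, eval_X, eval_pow, eval_add, eval_natCast, eval_one]
        rw [← mul_assoc, ← hchoose]
        ring
    rw [sum_range_succ', sum_congr rfl hterm, ← add_pow]
    simp [abel_succ]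

end CommSemiring

variable {R : Type*} [CommRing R] [IsAddTorsionFree R]

theorem eq_of_derivative_eq_of_eval_zero_eq {p q : R[X]} (hd : derivative p = derivative q)
    (h0 : p.eval 0 = q.eval 0) : p = q := by
  have h := eq_C_of_derivative_eq_zero (p := p - q) (by rw [derivative_sub, hd, sub_self])
  rwa [coeff_zero_eq_eval_zero, eval_sub, h0, sub_self, map_zero, sub_eq_zero] at h

theorem abel_comp_X_add_C (x : R) (m : ℕ) :
    (abel m).comp (X + C x) =
      ∑ j ∈ range (m + 1), C (m.choose j * (abel j).eval x) * abel (m - j) := by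
  induction m with
  | zero => simp
  | succ m ih =>
    apply eq_of_derivative_eq_of_eval_zero_eq
    · have hterm : ∀ j ∈ range (m + 1), derivative (C ((m + 1).choose j * (abel j).eval x) *
          abel (m + 1 - j)) = ((m + 1 : ℕ) : R[X]) * ((C (m.choose j * (abel j).eval x) *
          abel (m - j)).comp (X + 1)) := by
        intro j hj
        have hjm := mem_range_succ_iff.mp hj
        have hchoose := congrArg (Nat.cast (R := R[X])) (Nat.choose_mul_succ_eq m j)
        rw [Nat.sub_add_comm hjm, derivative_C_mul, derivative_abel_succ, mul_comp, C_comp,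
          map_mul, map_mul, map_natCast, map_natCast]
        push_cast [Nat.cast_sub hjm, Nat.cast_sub (hjm.trans m.le_succ)] at hchoose ⊢
        linear_combination -(C (eval x (abel j)) * (abel (m - j)).comp (X + 1)) * hchoose
      have hshift := congrArg (·.comp (X + 1)) ih
      simp only [comp_assoc, add_comp, X_comp, C_comp, sum_comp] at hshift
      rw [derivative_comp, derivative_abel_succ, derivative_add, derivative_X, derivative_C,
        add_zero, one_mul, mul_comp, natCast_comp, comp_assoc, add_comp, X_comp, one_comp,
        add_right_comm, hshift, mul_sum, sum_range_succ _ (m + 1), derivative_add, derivative_sum,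
        sum_congr rfl hterm, Nat.sub_self, abel_zero, mul_one, derivative_C, add_zero]
    · rw [eval_finsetSum, sum_range_succ, sum_eq_zero, eval_comp]
      · simp
      · intro j hj
        rw [Nat.sub_add_comm (mem_range_succ_iff.mp hj), eval_mul, eval_zero_abel_succ, mul_zero]

theorem eval_add_abel (x y : R) (m : ℕ) :
    (abel m).eval (x + y) =
      ∑ j ∈ range (m + 1), m.choose j * (abel j).eval x * (abel (m - j)).eval y := by
  simpa [eval_finsetSum, add_comm y, mul_assoc] using congrArg (eval y) (abel_comp_X_add_C x m)

end Polynomial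

open scoped Nat

theorem div_factorial_mul_div_factorial_sub {K : Type*} [Field K] [CharZero K] {k n : ℕ}
    (h : k ≤ n) (a b : K) : a / k ! * (b / (n - k)!) = n.choose k * a * b / n ! := by
  have : (n ! : K) ≠ 0 := Nat.cast_ne_zero.mpr n.factorial_ne_zero
  rw [Nat.cast_choose K h]
  field_simp

namespace PowerSeries

theorem mk_div_factorial_mul_mk_div_factorial {K : Type*} [Field K] [CharZero K] (a b : ℕ → K) :
    mk (fun n => a n / n !) * mk (fun n => b n / n !) =
      mk fun n => (∑ j ∈ range (n + 1), n.choose j * a j * b (n - j)) / n ! := by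
  ext n
  rw [coeff_mul, Nat.sum_antidiagonal_eq_sum_range_succ_mk, coeff_mk, sum_div]
  refine sum_congr rfl fun j hj => ?_
  simp only [coeff_mk]
  exact div_factorial_mul_div_factorial_sub (mem_range_succ_iff.mp hj) _ _

end PowerSeries

open PowerSeries
open Polynomial (abel eval_add_abel sum_choose_mul_eval_abel)

theorem derivative_Ttree : d⁄dX ℝ Ttree = mk fun n => (abel n).eval (1 : ℝ) / n ! := by
  ext m
  rw [coeff_derivative, Ttree, coeff_mk, coeff_mk, if_neg m.succ_ne_zero]
  cases m with
  | zero => simp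
  | succ j =>
    rw [Polynomial.abel_succ, Nat.factorial_succ (j + 1), show j + 1 + 1 - 2 = j by omega]
    simp only [Polynomial.eval_mul, Polynomial.eval_pow, Polynomial.eval_add, Polynomial.eval_X,
      Polynomial.eval_natCast]
    push_cast
    field_simp
    ring

theorem derivative_Ttree_pow (k : ℕ) :
    d⁄dX ℝ Ttree ^ k = mk fun n => (abel n).eval (k : ℝ) / n ! := by
  induction k with
  | zero => ext n; cases n <;> simp [coeff_one]
  | succ k ih =>
    rw [pow_succ, ih, derivative_Ttree, mk_div_factorial_mul_mk_div_factorial]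
    congr
    funext n
    rw [Nat.cast_succ, eval_add_abel]

/-- `T'(z) = exp(z·T'(z))` as formal power series. -/
theorem stmt_5 :
    PowerSeries.derivativeFun Ttree
      = PSComp (PowerSeries.exp ℝ) (PowerSeries.X * PowerSeries.derivativeFun Ttree) := by
  change d⁄dX ℝ Ttree = PSComp (exp ℝ) (X * d⁄dX ℝ Ttree)
  ext n
  have hterm : ∀ k ∈ range (n + 1), coeff k (exp ℝ) * coeff n ((X * d⁄dX ℝ Ttree) ^ k)
      = n.choose k * (abel (n - k)).eval (k : ℝ) / n ! := by
    intro k hk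
    obtain ⟨j, rfl⟩ := Nat.exists_eq_add_of_le' (mem_range_succ_iff.mp hk)
    rw [coeff_exp, mul_pow, coeff_X_pow_mul, derivative_Ttree_pow, coeff_mk, Nat.add_sub_cancel]
    simpa using
      div_factorial_mul_div_factorial_sub (Nat.le_add_left k j) 1 ((abel j).eval (k : ℝ))
  rw [PSComp, coeff_mk, sum_congr rfl hterm, ← sum_div, sum_choose_mul_eval_abel,
    derivative_Ttree, coeff_mk]
end

section
/- The rooted labelled tree generating function T^•(z) = Σ_{n≥1} n^{n-1} z^n/n! satisfies T^•(s·e^{−s}) = s for all 0 ≤ s < 1; that is, T^• is the functional inverse of s ↦ s·e^{−s} on [0,1). -/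
/-!
Expand each `exp (-(n + 1) s)` in `∑ₙ (n + 1)ⁿ (s e^{-s})^{n+1} / (n + 1)!` into its exponential
series. For small `|s|` the double series converges absolutely, and its block on the diagonal
`n + k = m` is `s^{m+1} / (m+1)!` times `∑ᵢ (-1)^{m-i} C(m+1, i+1) (i+1)^m`, an `(m+1)`-st finite
difference of `x ↦ x^m`, which vanishes for `m ≥ 1`; only `s` survives. Both sides of
`T^•(s e^{-s}) = s` are real analytic on an interval `(-δ, 1)`, on which `|s e^{-s}| < 1/e` keeps
`s e^{-s}` inside the disc of convergence, so the identity theorem extends the equality from a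
neighbourhood of `0` to `[0, 1)`.
-/

open Finset Real Filter Topology FormalMultilinearSeries
open scoped Nat

theorem sum_range_neg_one_pow_mul_choose_mul_pow_eq_zero {R : Type*} [CommRing R] {k n : ℕ}
    (h : k < n) : ∑ l ∈ range (n + 1), (-1 : R) ^ (n - l) * n.choose l * (l : R) ^ k = 0 := by
  have := fwdDiff_iter_eq_sum_shift (1 : R) (fun r : R ↦ r ^ k) n 0
  rw [fwdDiff_iter_pow_eq_zero_of_lt h] at this
  simpa [zsmul_eq_mul, mul_assoc] using this.symm

theorem sum_antidiagonal_succ_pow_mul_neg_one_pow_div_eq_zero {K : Type*} [Field K] [CharZero K]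
    {m : ℕ} (hm : m ≠ 0) :
    ∑ p ∈ antidiagonal m, ((p.1 : K) + 1) ^ m * (-1) ^ p.2 / ((p.1 + 1)! * p.2 !) = 0 := by
  have key := sum_range_neg_one_pow_mul_choose_mul_pow_eq_zero (R := K) (Nat.lt_succ_self m)
  rw [sum_range_succ', Nat.cast_zero, zero_pow hm, mul_zero, add_zero] at key
  rw [Nat.sum_antidiagonal_eq_sum_range_succ
    (fun i j ↦ ((i : K) + 1) ^ m * (-1) ^ j / ((i + 1)! * j !)), ← zero_div ((m + 1)! : K),
    ← key, sum_div]
  refine sum_congr rfl fun i hi ↦ ?_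
  have him : i ≤ m := Nat.lt_succ_iff.mp (mem_range.mp hi)
  rw [Nat.cast_choose K (Nat.succ_le_succ him), Nat.succ_sub_succ, Nat.succ_eq_add_one]
  have : ((m + 1)! : K) ≠ 0 := Nat.cast_ne_zero.mpr (Nat.factorial_ne_zero _)
  push_cast
  field_simp

theorem Summable.tsum_eq_tsum_sum_antidiagonal {M A : Type*} [AddCommMonoid M] [TopologicalSpace M]
    [ContinuousAdd M] [T3Space M] [AddCommMonoid A] [HasAntidiagonal A] {f : A × A → M}
    (hf : Summable f) : ∑' p, f p = ∑' n, ∑ p ∈ antidiagonal n, f p := by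
  rw [← HasAntidiagonal.sigmaAntidiagonalEquivProd.tsum_eq f]
  refine (Summable.tsum_sigma' (fun n ↦ (hasSum_fintype _).summable)
    (HasAntidiagonal.sigmaAntidiagonalEquivProd.summable_iff.mpr hf)).trans ?_
  exact tsum_congr fun n ↦ (tsum_fintype _).trans (sum_finset_coe (fun p ↦ f p) _)

theorem Real.hasSum_pow_div_factorial (x : ℝ) : HasSum (fun n ↦ x ^ n / n !) (exp x) := by
  rw [exp_eq_exp_ℝ]
  exact NormedSpace.expSeries_div_hasSum_exp x

theorem mul_exp_neg_lt_exp_neg_one {t : ℝ} (ht : t ≠ 1) : t * exp (-t) < exp (-1) := by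
  have h : t < exp (t - 1) := by linarith [add_one_lt_exp (sub_ne_zero.mpr ht)]
  calc t * exp (-t) < exp (t - 1) * exp (-t) := mul_lt_mul_of_pos_right h (exp_pos _)
    _ = exp (-1) := by rw [← exp_add]; ring_nf

/-- The coefficient of `z ^ (n + 1)` in `T^•`; the shift avoids the `n = 0` term `0 ^ (0 - 1)`. -/
noncomputable def rootedTreeCoeff (n : ℕ) : ℝ := ((n : ℝ) + 1) ^ n / (n + 1)!

theorem rootedTreeCoeff_nonneg (n : ℕ) : 0 ≤ rootedTreeCoeff n := by
  unfold rootedTreeCoeff; positivity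

theorem rootedTreeCoeff_le_exp (n : ℕ) : rootedTreeCoeff n ≤ exp (n + 1) :=
  calc rootedTreeCoeff n ≤ ((n : ℝ) + 1) ^ (n + 1) / (n + 1)! := by
        unfold rootedTreeCoeff
        gcongr
        · linarith [(n.cast_nonneg : (0 : ℝ) ≤ n)]
        · omega
    _ ≤ exp (n + 1) := by
        simpa using pow_div_factorial_le_exp ((n : ℝ) + 1) (by positivity) (n + 1)

theorem le_radius_ofScalars_rootedTreeCoeff :
    ENNReal.ofReal (exp (-1)) ≤ (ofScalars ℝ rootedTreeCoeff).radius := by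
  refine le_radius_of_bound _ (exp 1) fun n ↦ ?_
  rw [ofScalars_norm, Real.norm_of_nonneg (rootedTreeCoeff_nonneg n),
    Real.coe_toNNReal _ (exp_pos _).le, ← exp_nat_mul]
  calc rootedTreeCoeff n * exp (n * -1) ≤ exp (n + 1) * exp (n * -1) :=
        mul_le_mul_of_nonneg_right (rootedTreeCoeff_le_exp n) (exp_pos _).le
    _ = exp 1 := by rw [← exp_add]; ring_nf

theorem mem_eball_radius_ofScalars_rootedTreeCoeff {y : ℝ} (hy : |y| < exp (-1)) :
    y ∈ Metric.eball 0 (ofScalars ℝ rootedTreeCoeff).radius := by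
  rw [Metric.mem_eball, edist_zero_right, Real.enorm_eq_ofReal_abs]
  exact ((ENNReal.ofReal_lt_ofReal_iff (exp_pos _)).mpr hy).trans_le
    le_radius_ofScalars_rootedTreeCoeff

theorem summable_rootedTreeCoeff_mul_pow {y : ℝ} (hy : |y| < exp (-1)) :
    Summable fun n ↦ rootedTreeCoeff n * y ^ n := by
  simpa [ofScalars_apply_eq, mul_comm] using
    (ofScalars ℝ rootedTreeCoeff).summable (mem_eball_radius_ofScalars_rootedTreeCoeff hy)

noncomputable def rootedTreeFun (x : ℝ) : ℝ := x * ofScalarsSum rootedTreeCoeff x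

theorem rootedTreeFun_eq_tsum (x : ℝ) :
    rootedTreeFun x = ∑' n, rootedTreeCoeff n * x ^ (n + 1) := by
  rw [rootedTreeFun, ofScalars_sum_eq, ← tsum_mul_left]
  exact tsum_congr fun n ↦ by rw [smul_eq_mul, pow_succ']; ring

theorem analyticAt_rootedTreeFun {y : ℝ} (hy : |y| < exp (-1)) :
    AnalyticAt ℝ rootedTreeFun y :=
  analyticAt_id.mul
    ((ofScalars ℝ rootedTreeCoeff).analyticOnNhd y (mem_eball_radius_ofScalars_rootedTreeCoeff hy))

noncomputable def treeExpTerm (x y : ℝ) (p : ℕ × ℕ) : ℝ :=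
  rootedTreeCoeff p.1 * x ^ (p.1 + 1) * (((p.1 + 1 : ℝ) * y) ^ p.2 / p.2 !)

theorem hasSum_treeExpTerm_row (x y : ℝ) (n : ℕ) :
    HasSum (fun k ↦ treeExpTerm x y (n, k)) (rootedTreeCoeff n * (x * exp y) ^ (n + 1)) := by
  have hrow : rootedTreeCoeff n * (x * exp y) ^ (n + 1)
      = rootedTreeCoeff n * x ^ (n + 1) * exp ((n + 1) * y) := by
    rw [mul_pow, ← exp_nat_mul]
    push_cast
    ring
  rw [hrow]
  exact (Real.hasSum_pow_div_factorial _).mul_left _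

theorem abs_treeExpTerm (x y : ℝ) (p : ℕ × ℕ) : |treeExpTerm x y p| = treeExpTerm |x| |y| p := by
  simp [treeExpTerm, abs_mul, abs_div, abs_pow, abs_of_nonneg (rootedTreeCoeff_nonneg _),
    abs_of_nonneg (by positivity : (0 : ℝ) ≤ p.1 + 1)]

theorem summable_treeExpTerm {x y : ℝ} (h : |x| * exp |y| < exp (-1)) :
    Summable (treeExpTerm x y) := by
  refine Summable.of_abs ?_
  simp_rw [abs_treeExpTerm]
  refine (summable_prod_of_nonneg fun p ↦ ?_).mpr
    ⟨fun n ↦ (hasSum_treeExpTerm_row _ _ n).summable, ?_⟩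
  · rw [← abs_treeExpTerm]; exact abs_nonneg _
  have hz : |(|x| * exp |y|)| < exp (-1) := by rwa [abs_of_nonneg (by positivity)]
  refine ((summable_rootedTreeCoeff_mul_pow hz).mul_right (|x| * exp |y|)).congr fun n ↦ ?_
  rw [(hasSum_treeExpTerm_row _ _ n).tsum_eq, pow_succ, mul_assoc]

theorem sum_antidiagonal_treeExpTerm_neg (s : ℝ) (m : ℕ) :
    ∑ p ∈ antidiagonal m, treeExpTerm s (-s) p = if m = 0 then s else 0 := by
  split_ifs with hm
  · subst hm; simp [treeExpTerm, rootedTreeCoeff]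
  rw [← mul_zero (s ^ (m + 1)), ← sum_antidiagonal_succ_pow_mul_neg_one_pow_div_eq_zero hm,
    mul_sum]
  refine sum_congr rfl fun ⟨i, j⟩ hp ↦ ?_
  obtain rfl : i + j = m := mem_antidiagonal.mp hp
  simp only [treeExpTerm, rootedTreeCoeff]
  rw [mul_neg, neg_pow (((i : ℝ) + 1) * s), mul_pow]
  ring

theorem rootedTreeFun_mul_exp_neg_of_small {s : ℝ} (hs : |s| * exp |s| < exp (-1)) :
    rootedTreeFun (s * exp (-s)) = s := by
  have hF : Summable (treeExpTerm s (-s)) := summable_treeExpTerm (by rwa [abs_neg])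
  calc rootedTreeFun (s * exp (-s))
      = ∑' n, ∑' k, treeExpTerm s (-s) (n, k) := by
        rw [rootedTreeFun_eq_tsum]
        exact tsum_congr fun n ↦ (hasSum_treeExpTerm_row s (-s) n).tsum_eq.symm
    _ = ∑' m, ∑ p ∈ antidiagonal m, treeExpTerm s (-s) p := by
        rw [← hF.tsum_prod' fun n ↦ (hasSum_treeExpTerm_row s (-s) n).summable,
          hF.tsum_eq_tsum_sum_antidiagonal]
    _ = s := by simp_rw [sum_antidiagonal_treeExpTerm_neg]; exact tsum_ite_eq 0 (fun _ ↦ s)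

/-- The rooted labelled tree function `T^•(z) = Σ_{n≥1} n^{n-1} z^n/n!`
satisfies `T^•(s·e^{−s}) = s` for `0 ≤ s < 1`. -/
theorem stmt_13 (s : ℝ) (h0 : 0 ≤ s) (h1 : s < 1) :
    ∑' n : ℕ, ((n : ℝ) + 1) ^ n * (s * Real.exp (-s)) ^ (n + 1) / (Nat.factorial (n + 1))
      = s := by
  obtain ⟨δ, hδ, hsmall⟩ : ∃ δ > 0, ∀ t : ℝ, |t| < δ → |t| * exp |t| < exp (-1) := by
    have : ∀ᶠ t in 𝓝 (0 : ℝ), |t| * exp |t| < exp (-1) :=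
      (by fun_prop : Continuous fun t : ℝ ↦ |t| * exp |t|).tendsto 0 |>.eventually
        (gt_mem_nhds (by simpa using exp_pos (-1)))
    simpa [Real.dist_eq] using Metric.eventually_nhds_iff.mp this
  have hφ : ∀ t ∈ Set.Ioo (-δ) 1, |t * exp (-t)| < exp (-1) := by
    rintro t ⟨htδ, ht1⟩
    rcases lt_or_ge t 0 with hneg | hnonneg
    · rw [abs_mul, abs_exp, ← abs_of_neg hneg]
      exact hsmall t (abs_lt.mpr ⟨htδ, by linarith⟩)
    · rw [abs_of_nonneg (by positivity)]
      exact mul_exp_neg_lt_exp_neg_one ht1.ne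
  have hanalytic : AnalyticOnNhd ℝ (fun t ↦ rootedTreeFun (t * exp (-t))) (Set.Ioo (-δ) 1) :=
    fun t ht ↦ (analyticAt_rootedTreeFun (hφ t ht)).comp (f := fun t ↦ t * exp (-t)) (by fun_prop)
  have hnear : (fun t ↦ rootedTreeFun (t * exp (-t))) =ᶠ[𝓝 0] id := by
    filter_upwards [Metric.ball_mem_nhds 0 hδ] with t ht
    exact rootedTreeFun_mul_exp_neg_of_small (hsmall t (by simpa using ht))
  calc _ = rootedTreeFun (s * exp (-s)) := by
        rw [rootedTreeFun_eq_tsum]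
        exact tsum_congr fun n ↦ by rw [rootedTreeCoeff]; ring
    _ = s := hanalytic.eqOn_of_preconnected_of_eventuallyEq analyticOnNhd_id isPreconnected_Ioo
        ⟨by linarith, by norm_num⟩ hnear ⟨by linarith, h1⟩
end

section
/- Let {τ_1,…,τ_k} be trees on label sets V_1,…,V_k respectively, with |V_i ∩ V_j| ≤ 1 for all i ≠ j. Define the merging graph M on vertex set [k] ∪ {(p,⋆) : p ∈ V_i ∩ V_j for some i<j}, with an edge between i and (p,⋆) whenever p ∈ V_i. Then the merged graph G (with vertex set ∪V_i and edge set ∪E(τ_i)) is a tree if and only if M is a tree. -/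
/-!
Every vertex of the merging graph `M` stands for a set of labels (`V i` for a tree `i`, `{p}` for
an intersection point `p`). Adjacent vertices of `M` share a label, the ends of an edge of `G`
lie in a common tree, and all vertices of `M` containing a given label are linked through it.
Together with the connectedness of each tree, this translates walks of `M` into walks of `G`
and back, so `G` is connected iff `M` is.

Because two label sets share at most one label, the trees are edge-disjoint, so
`|E(G)| = ∑ (|V i| - 1)`, while `|E(M)| = ∑ |V i ∩ I|` for the set `I` of intersection points.
A label outside `I` lies in exactly one `V i`, hence `∑ |V i| = |E(M)| + |⋃ V i| - |I|` and
`|E(G)| - |V(G)| = |E(M)| - |V(M)|`. A finite connected graph is a tree iff it has one edge fewer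
than vertices.
-/

open SimpleGraph Finset

namespace SimpleGraph

variable {V W : Type*} {G H : SimpleGraph V} {K : SimpleGraph W}

theorem Walk.reachable_of_overlapping (B : V → Set W)
    (hB : ∀ v, ∀ x ∈ B v, ∀ y ∈ B v, K.Reachable x y)
    (hadj : ∀ u v, G.Adj u v → (B u ∩ B v).Nonempty) {u v : V} (p : G.Walk u v) {x y : W}
    (hx : x ∈ B u) (hy : y ∈ B v) : K.Reachable x y := by
  induction p generalizing x with
  | nil => exact hB _ x hx y hy
  | cons h p ih =>
    obtain ⟨z, hzu, hzw⟩ := hadj _ _ h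
    exact (hB _ x hx z hzu).trans (ih hzw hy)

theorem Connected.of_overlapping (hG : G.Connected) (B : V → Set W)
    (hB : ∀ v, ∀ x ∈ B v, ∀ y ∈ B v, K.Reachable x y)
    (hadj : ∀ u v, G.Adj u v → (B u ∩ B v).Nonempty) (hne : ∀ v, (B v).Nonempty)
    (hcover : ∀ y, ∃ v, y ∈ B v) : K.Connected := by
  have : Nonempty W := ⟨(hne hG.nonempty.some).some⟩
  refine ⟨fun x y => ?_⟩
  obtain ⟨u, hu⟩ := hcover x
  obtain ⟨v, hv⟩ := hcover y
  exact (hG.preconnected u v).elim fun p => p.reachable_of_overlapping B hB hadj hu hv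

theorem edgeSet_eq_image_edgeSet_induce {s : Set V} (h : G.support ⊆ s) :
    G.edgeSet = Sym2.map (↑) '' (G.induce s).edgeSet := by
  conv_lhs => rw [← (G.spanningCoe_induce_eq_self s).2 h]
  exact edgeSet_map _ _

theorem natCard_edgeSet_induce {s : Set V} (h : G.support ⊆ s) :
    Nat.card (G.induce s).edgeSet = Nat.card G.edgeSet := by
  rw [edgeSet_eq_image_edgeSet_induce h,
    Nat.card_image_of_injective (Sym2.map.injective Subtype.val_injective)]

theorem finite_edgeSet_of_support_subset {s : Set V} (hs : s.Finite) (h : G.support ⊆ s) :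
    G.edgeSet.Finite := by
  have := hs.to_subtype
  rw [edgeSet_eq_image_edgeSet_induce h]
  exact (Set.toFinite _).image _

theorem IsTree.natCard_edgeSet_add_one_of_induce {s : Finset V} (hG : (G.induce ↑s).IsTree)
    (h : G.support ⊆ s) : Nat.card G.edgeSet + 1 = #s := by
  rw [← natCard_edgeSet_induce h, (isTree_iff_connected_and_card.1 hG).2, Nat.card_coe_set_eq,
    Set.ncard_coe_finset]

theorem natCard_edgeSet_iSup {ι : Type*} [Finite ι] (G : ι → SimpleGraph V)
    (hfin : ∀ i, (G i).edgeSet.Finite)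
    (hdisj : Pairwise fun i j => Disjoint (G i).edgeSet (G j).edgeSet) :
    Nat.card (⨆ i, G i).edgeSet = ∑ᶠ i, Nat.card (G i).edgeSet := by
  simp only [edgeSet_iSup, Nat.card_coe_set_eq]
  exact Set.ncard_iUnion_of_finite hfin hdisj

theorem disjoint_edgeSet_of_card_inter_le_one [DecidableEq V] {s t : Finset V}
    (hG : G.support ⊆ s) (hH : H.support ⊆ t) (hst : #(s ∩ t) ≤ 1) :
    Disjoint G.edgeSet H.edgeSet := by
  refine Set.disjoint_left.2 fun e heG heH => ?_
  induction e using Sym2.ind with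
  | _ a b =>
    have hab : G.Adj a b := heG
    have hab' : H.Adj a b := heH
    exact hab.ne <| card_le_one.1 hst a (mem_inter.2 ⟨hG ⟨b, hab⟩, hH ⟨b, hab'⟩⟩)
      b (mem_inter.2 ⟨hG ⟨a, hab.symm⟩, hH ⟨a, hab'.symm⟩⟩)

end SimpleGraph

section Merging

variable {ι α : Type*} (V : ι → Finset α)

def mergingAdj (x y : ι ⊕ α) : Prop :=
  ∃ i p, x = Sum.inl i ∧ y = Sum.inr p ∧ p ∈ V i ∧ ∃ j, j ≠ i ∧ p ∈ V j

def mergingVerts : Set (ι ⊕ α) :=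
  {x | (∃ i, x = Sum.inl i) ∨
    ∃ p, x = Sum.inr p ∧ ∃ i j, i ≠ j ∧ p ∈ V i ∧ p ∈ V j}

def mergingGraph : SimpleGraph (mergingVerts V) :=
  (fromRel (mergingAdj V)).induce (mergingVerts V)

def labels : ι ⊕ α → Set α :=
  Sum.elim (fun i => ↑(V i)) fun p => {p}

variable {V}

theorem inl_mem_mergingVerts (i : ι) : (Sum.inl i : ι ⊕ α) ∈ mergingVerts V :=
  Or.inl ⟨i, rfl⟩

theorem exists_mem_of_inr_mem_mergingVerts {p : α} (hp : Sum.inr p ∈ mergingVerts V) :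
    ∃ i, p ∈ V i := by
  obtain ⟨i, hi⟩ | ⟨q, hq, i, -, -, hqi, -⟩ := hp
  · exact absurd hi Sum.inr_ne_inl
  · exact ⟨i, Sum.inr_injective hq ▸ hqi⟩

theorem exists_ne_mem_of_inr_mem_mergingVerts {p : α} (hp : Sum.inr p ∈ mergingVerts V)
    (i : ι) : ∃ j, j ≠ i ∧ p ∈ V j := by
  obtain ⟨j, hj⟩ | ⟨q, hq, j, j', hjj', hqj, hqj'⟩ := hp
  · exact absurd hj Sum.inr_ne_inl
  obtain rfl := Sum.inr_injective hq
  by_cases hji : j = i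
  · exact ⟨j', hji ▸ hjj'.symm, hqj'⟩
  · exact ⟨j, hji, hqj⟩

theorem mergingAdj_inl_inr_iff {i : ι} {p : α} :
    mergingAdj V (Sum.inl i) (Sum.inr p) ↔ p ∈ V i ∧ Sum.inr p ∈ mergingVerts V := by
  constructor
  · rintro ⟨i, p, ⟨⟩, ⟨⟩, hpi, j, hji, hpj⟩
    exact ⟨hpi, Or.inr ⟨p, rfl, j, i, hji, hpj, hpi⟩⟩
  · rintro ⟨hpi, hp⟩
    exact ⟨i, p, rfl, rfl, hpi, exists_ne_mem_of_inr_mem_mergingVerts hp i⟩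

theorem support_fromRel_mergingAdj_subset :
    (fromRel (mergingAdj V)).support ⊆ mergingVerts V := by
  rintro x ⟨y, -, ⟨i, p, rfl, -⟩ | ⟨i, p, -, rfl, hpi, j, hji, hpj⟩⟩
  · exact inl_mem_mergingVerts i
  · exact Or.inr ⟨p, rfl, j, i, hji, hpj, hpi⟩

theorem mergingGraph_adj {u v : mergingVerts V} :
    (mergingGraph V).Adj u v ↔ mergingAdj V u v ∨ mergingAdj V v u := by
  simp only [mergingGraph, comap_adj, Function.Embedding.coe_subtype, fromRel_adj, ne_eq,
    and_iff_right_iff_imp]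
  rintro (⟨i, p, hu, hv, -⟩ | ⟨i, p, hv, hu, -⟩) huv
  · exact Sum.inl_ne_inr (hu.symm.trans (huv.trans hv))
  · exact Sum.inl_ne_inr (hv.symm.trans (huv.symm.trans hu))

theorem mergingGraph_adj_inl_inr {i : ι} {p : α} (hp : Sum.inr p ∈ mergingVerts V)
    (hpi : p ∈ V i) :
    (mergingGraph V).Adj ⟨Sum.inl i, inl_mem_mergingVerts i⟩ ⟨Sum.inr p, hp⟩ :=
  mergingGraph_adj.2 (Or.inl (mergingAdj_inl_inr_iff.2 ⟨hpi, hp⟩))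

theorem mergingGraph_reachable_inl {p : α} {u : mergingVerts V} {i : ι}
    (hu : p ∈ labels V u) (hi : p ∈ V i) :
    (mergingGraph V).Reachable u ⟨Sum.inl i, inl_mem_mergingVerts i⟩ := by
  obtain ⟨j | q, hq⟩ := u
  · by_cases hji : j = i
    · subst hji; rfl
    have hp : Sum.inr p ∈ mergingVerts V := Or.inr ⟨p, rfl, j, i, hji, hu, hi⟩
    exact (mergingGraph_adj_inl_inr hp hu).reachable.trans
      (mergingGraph_adj_inl_inr hp hi).symm.reachable
  · obtain rfl : p = q := hu
    exact (mergingGraph_adj_inl_inr hq hi).symm.reachable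

variable [Fintype ι] [DecidableEq α]

def mergedGraph (V : ι → Finset α) (τ : ι → SimpleGraph α) :
    SimpleGraph (↑(univ.biUnion V) : Set α) :=
  (⨆ i, τ i).induce ↑(univ.biUnion V)

variable {τ : ι → SimpleGraph α}
  (hsupp : ∀ i a b, (τ i).Adj a b → a ∈ V i ∧ b ∈ V i)
  (htree : ∀ i, ((τ i).induce (V i : Set α)).IsTree)
  (hint : ∀ i j, i ≠ j → #(V i ∩ V j) ≤ 1)

theorem mergedGraph_adj {x y : (↑(univ.biUnion V) : Set α)} :
    (mergedGraph V τ).Adj x y ↔ ∃ i, (τ i).Adj x y := by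
  simp [mergedGraph]

theorem exists_mergingVerts_mem_labels {x : α} (hx : x ∈ univ.biUnion V) :
    ∃ u : mergingVerts V, x ∈ labels V u := by
  obtain ⟨i, -, hi⟩ := mem_biUnion.1 hx
  exact ⟨⟨Sum.inl i, inl_mem_mergingVerts i⟩, hi⟩

include htree in
theorem exists_mem_labels (u : mergingVerts V) :
    ∃ x : (↑(univ.biUnion V) : Set α), ↑x ∈ labels V u := by
  obtain ⟨i | p, hu⟩ := u
  · obtain ⟨a, ha⟩ := Set.nonempty_coe_sort.1 (htree i).connected.nonempty
    exact ⟨⟨a, subset_biUnion_of_mem V (mem_univ i) ha⟩, ha⟩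
  · obtain ⟨i, hpi⟩ := exists_mem_of_inr_mem_mergingVerts hu
    exact ⟨⟨p, subset_biUnion_of_mem V (mem_univ i) hpi⟩, rfl⟩

include htree in
theorem mergedGraph_reachable_of_mem {i : ι} {x y : (↑(univ.biUnion V) : Set α)}
    (hx : ↑x ∈ V i) (hy : ↑y ∈ V i) : (mergedGraph V τ).Reachable x y :=
  ((htree i).connected.preconnected ⟨x, hx⟩ ⟨y, hy⟩).map
    (induceHom (Hom.ofLE (le_iSup τ i)) fun _ ha => subset_biUnion_of_mem V (mem_univ i) ha)

include htree in
theorem mergedGraph_connected_of_mergingGraph_connected (hM : (mergingGraph V).Connected) :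
    (mergedGraph V τ).Connected := by
  refine hM.of_overlapping (fun u => Subtype.val ⁻¹' labels V u) ?_ ?_
    (exists_mem_labels htree) fun x => exists_mergingVerts_mem_labels x.2
  · rintro ⟨i | p, _⟩ x hx y hy
    · exact mergedGraph_reachable_of_mem htree hx hy
    · exact (Subtype.ext (hx.trans hy.symm) : x = y) ▸ Reachable.refl x
  · intro u v huv
    obtain ⟨i, p, hu, hv, hpi, -⟩ | ⟨i, p, hv, hu, hpi, -⟩ := mergingGraph_adj.1 huv <;>
    · refine ⟨⟨p, subset_biUnion_of_mem V (mem_univ i) hpi⟩, ?_, ?_⟩ <;>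
        simp [hu, hv, labels, hpi]

include hsupp htree in
theorem mergingGraph_connected_of_mergedGraph_connected (hG : (mergedGraph V τ).Connected) :
    (mergingGraph V).Connected := by
  refine hG.of_overlapping (fun x => {u | (x : α) ∈ labels V u}) ?_ ?_
    (fun x => exists_mergingVerts_mem_labels x.2) (exists_mem_labels htree)
  · rintro ⟨x, hx⟩ u hu v hv
    obtain ⟨i, -, hi⟩ := mem_biUnion.1 hx
    exact (mergingGraph_reachable_inl hu hi).trans (mergingGraph_reachable_inl hv hi).symm
  · intro x y hxy
    obtain ⟨i, hi⟩ := mergedGraph_adj.1 hxy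
    exact ⟨⟨Sum.inl i, inl_mem_mergingVerts i⟩, (hsupp i _ _ hi).1, (hsupp i _ _ hi).2⟩

include hsupp htree hint in
theorem natCard_edgeSet_mergedGraph_add_card :
    Nat.card (mergedGraph V τ).edgeSet + Fintype.card ι = ∑ i, #(V i) := by
  have hsupp' : ∀ i, (τ i).support ⊆ ↑(V i) := fun i a ⟨b, hab⟩ => (hsupp i a b hab).1
  have hsuppG : (⨆ i, τ i).support ⊆ ↑(univ.biUnion V) := by
    rintro a ⟨b, hab⟩
    obtain ⟨i, hi⟩ := iSup_adj.1 hab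
    exact subset_biUnion_of_mem V (mem_univ i) (hsupp i a b hi).1
  rw [mergedGraph, natCard_edgeSet_induce hsuppG,
    natCard_edgeSet_iSup τ
      (fun i => finite_edgeSet_of_support_subset (V i).finite_toSet (hsupp' i))
      (fun i j hij => disjoint_edgeSet_of_card_inter_le_one (hsupp' i) (hsupp' j) (hint i j hij)),
    finsum_eq_sum_of_fintype, ← card_univ, card_eq_sum_ones, ← sum_add_distrib]
  exact sum_congr rfl fun i _ => (htree i).natCard_edgeSet_add_one_of_induce (hsupp' i)

variable [DecidableEq ι]

variable (V) in
def intersectionPoints : Finset α :=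
  {p ∈ univ.biUnion V | ∃ i j, i ≠ j ∧ p ∈ V i ∧ p ∈ V j}

theorem mem_intersectionPoints {p : α} :
    p ∈ intersectionPoints V ↔ ∃ i j, i ≠ j ∧ p ∈ V i ∧ p ∈ V j := by
  simp only [intersectionPoints, mem_filter, and_iff_right_iff_imp]
  rintro ⟨i, -, -, hpi, -⟩
  exact subset_biUnion_of_mem V (mem_univ i) hpi

theorem mergingVerts_eq :
    mergingVerts V = ↑((univ : Finset ι).disjSum (intersectionPoints V)) := by
  ext (i | p) <;> simp [mergingVerts, mem_intersectionPoints]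

theorem inr_mem_mergingVerts_iff {p : α} :
    Sum.inr p ∈ mergingVerts V ↔ p ∈ intersectionPoints V := by
  simp [mergingVerts_eq]

theorem natCard_mergingVerts :
    Nat.card (mergingVerts V) = Fintype.card ι + #(intersectionPoints V) := by
  rw [mergingVerts_eq, Nat.card_coe_set_eq, Set.ncard_coe_finset, card_disjSum, card_univ]

theorem edgeSet_fromRel_mergingAdj : (fromRel (mergingAdj V)).edgeSet =
    ↑((univ.sigma fun i => V i ∩ intersectionPoints V).image
      fun x => s(Sum.inl x.1, Sum.inr x.2)) := by
  ext e
  induction e using Sym2.ind with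
  | _ x y =>
    rcases x with i | p <;> rcases y with j | q <;>
      simp only [mem_edgeSet, fromRel_adj, mergingAdj_inl_inr_iff, inr_mem_mergingVerts_iff] <;>
      simp [mergingAdj]

theorem natCard_edgeSet_mergingGraph :
    Nat.card (mergingGraph V).edgeSet = ∑ i, #(V i ∩ intersectionPoints V) := by
  have hinj : Function.Injective fun x : (_ : ι) × α => s(Sum.inl x.1, Sum.inr x.2) := by
    rintro ⟨i, p⟩ ⟨j, q⟩ h
    simp_all
  rw [mergingGraph, natCard_edgeSet_induce support_fromRel_mergingAdj_subset,
    edgeSet_fromRel_mergingAdj, Nat.card_coe_set_eq, Set.ncard_coe_finset,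
    card_image_of_injective _ hinj, card_sigma]

theorem sum_card_eq_sum_card_inter_add_card_sdiff :
    ∑ i, #(V i) =
      ∑ i, #(V i ∩ intersectionPoints V) + #(univ.biUnion V \ intersectionPoints V) := by
  have hdisj :
      (↑(univ : Finset ι) : Set ι).PairwiseDisjoint fun i => V i \ intersectionPoints V := by
    intro i _ j _ hij
    refine disjoint_left.2 fun p hpi hpj => (mem_sdiff.1 hpi).2 ?_
    exact mem_intersectionPoints.2 ⟨i, j, hij, (mem_sdiff.1 hpi).1, (mem_sdiff.1 hpj).1⟩
  have hunion : univ.biUnion V \ intersectionPoints V =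
      univ.biUnion fun i => V i \ intersectionPoints V := by
    ext p; simp
  rw [hunion, card_biUnion hdisj, ← sum_add_distrib]
  exact sum_congr rfl fun i _ => (card_inter_add_card_sdiff _ _).symm

include hsupp htree hint in
theorem natCard_edgeSet_mergedGraph_add_natCard_mergingVerts :
    Nat.card (mergedGraph V τ).edgeSet + Nat.card (mergingVerts V) =
      Nat.card (mergingGraph V).edgeSet + Nat.card (↑(univ.biUnion V) : Set α) := by
  have hG := natCard_edgeSet_mergedGraph_add_card hsupp htree hint
  have hsplit := sum_card_eq_sum_card_inter_add_card_sdiff (V := V)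
  have hI : #(univ.biUnion V \ intersectionPoints V) + #(intersectionPoints V) =
      #(univ.biUnion V) :=
    card_sdiff_add_card_eq_card (filter_subset _ _)
  rw [natCard_mergingVerts, natCard_edgeSet_mergingGraph,
    Nat.card_coe_set_eq (↑(univ.biUnion V) : Set α), Set.ncard_coe_finset]
  omega

include hsupp htree hint in
theorem isTree_mergedGraph_iff_isTree_mergingGraph :
    (mergedGraph V τ).IsTree ↔ (mergingGraph V).IsTree := by
  have : Finite (mergingVerts V) := (mergingVerts_eq (V := V) ▸ finite_toSet _).to_subtype
  have hcount := natCard_edgeSet_mergedGraph_add_natCard_mergingVerts hsupp htree hint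
  rw [isTree_iff_connected_and_card, isTree_iff_connected_and_card]
  constructor
  · rintro ⟨hG, hcard⟩
    exact ⟨mergingGraph_connected_of_mergedGraph_connected hsupp htree hG, by omega⟩
  · rintro ⟨hM, hcard⟩
    exact ⟨mergedGraph_connected_of_mergingGraph_connected htree hM, by omega⟩

end Merging

theorem stmt_19_general {α : Type*} [DecidableEq α] (k : ℕ)
    (V : Fin k → Finset α) (τ : Fin k → SimpleGraph α)
    -- each τ i has all its edges inside V i :
    (hsupp : ∀ i a b, (τ i).Adj a b → a ∈ V i ∧ b ∈ V i)
    -- each τ i, viewed on its label set V i, is a tree :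
    (htree : ∀ i, ((τ i).induce (V i : Set α)).IsTree)
    -- pairwise intersections have at most one point :
    (hint : ∀ i j, i ≠ j → (V i ∩ V j).card ≤ 1) :
    -- G : the merging, with vertex set ⋃ V i and edge set ⋃ E(τ i)
    (((⨆ i, τ i : SimpleGraph α).induce (↑(Finset.univ.biUnion V) : Set α)).IsTree
      ↔
    -- M : the merging graph on [k] ∪ (intersection points) × {⋆}
    ((SimpleGraph.fromRel fun x y : Fin k ⊕ α =>
        ∃ i p, x = Sum.inl i ∧ y = Sum.inr p ∧ p ∈ V i ∧ ∃ j, j ≠ i ∧ p ∈ V j).induce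
      {x : Fin k ⊕ α | (∃ i, x = Sum.inl i) ∨
        ∃ p, x = Sum.inr p ∧ ∃ i j, i ≠ j ∧ p ∈ V i ∧ p ∈ V j}).IsTree) :=
  isTree_mergedGraph_iff_isTree_mergingGraph hsupp htree hint

/-- Proposition: given trees `τ 1, …, τ k` on label sets `V 1, …, V k` with pairwise
intersections of size at most one, the merged graph `G = ⋃ τ i` (on the union of the
label sets) is a tree if and only if the merging graph `M` — the bipartite graph between
tree indices `[k]` and intersection points, joining `i` to `p` whenever `p ∈ V i` and
`p` is an intersection point — is a tree. -/
theorem stmt_19 {α : Type*} [Fintype α] [DecidableEq α] (k : ℕ)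
    (V : Fin k → Finset α) (τ : Fin k → SimpleGraph α)
    -- each τ i has all its edges inside V i :
    (hsupp : ∀ i a b, (τ i).Adj a b → a ∈ V i ∧ b ∈ V i)
    -- each τ i, viewed on its label set V i, is a tree :
    (htree : ∀ i, ((τ i).induce (V i : Set α)).IsTree)
    -- pairwise intersections have at most one point :
    (hint : ∀ i j, i ≠ j → (V i ∩ V j).card ≤ 1) :
    -- G : the merging, with vertex set ⋃ V i and edge set ⋃ E(τ i)
    (((⨆ i, τ i : SimpleGraph α).induce (↑(Finset.univ.biUnion V) : Set α)).IsTree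
      ↔
    -- M : the merging graph on [k] ∪ (intersection points) × {⋆}
    ((SimpleGraph.fromRel fun x y : Fin k ⊕ α =>
        ∃ i p, x = Sum.inl i ∧ y = Sum.inr p ∧ p ∈ V i ∧ ∃ j, j ≠ i ∧ p ∈ V j).induce
      {x : Fin k ⊕ α | (∃ i, x = Sum.inl i) ∨
        ∃ p, x = Sum.inr p ∧ ∃ i j, i ≠ j ∧ p ∈ V i ∧ p ∈ V j}).IsTree) :=
  stmt_19_general k V τ hsupp htree hint
end
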